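/- arXiv:2507.17322 — 6 statements merged into one kernel-verified Lean document; each statement's English description precedes it below -/
import Mathlib

section
/- For all real numbers s with 1/2 ≤ s ≤ 1 and all β with 0 < β < 1, one has 1 ≤ s^β + (2^β - 1)(1 - s)^β. -/
theorem stmt_0 (s β : ℝ) (hs : 1/2 ≤ s) (hs1 : s ≤ 1) (hβ : 0 < β) (hβ1 : β < 1) :
    1 ≤ s ^ β + (2 ^ β - 1) * (1 - s) ^ β := by
  have hc := Real.concaveOn_rpow hβ.le hβ1.le
  set a : ℝ := 2 - 2 * s with ha
  set b : ℝ := 2 * s - 1 with hb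
  have ha0 : 0 ≤ a := by linarith
  have hb0 : 0 ≤ b := by linarith
  have hab : a + b = 1 := by ring
  have h1 : a * (1/2 : ℝ) ^ β + b * (1 : ℝ) ^ β ≤ s ^ β := by
    have := hc.2 (show (1/2 : ℝ) ∈ Set.Ici (0:ℝ) by norm_num)
      (show (1 : ℝ) ∈ Set.Ici (0:ℝ) by norm_num) ha0 hb0 hab
    simp only [smul_eq_mul] at this
    rw [show a * (1/2 : ℝ) + b * 1 = s by ring] at this
    exact this
  have h2 : a * (1/2 : ℝ) ^ β + b * (0 : ℝ) ^ β ≤ (1 - s) ^ β := by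
    have := hc.2 (show (1/2 : ℝ) ∈ Set.Ici (0:ℝ) by norm_num)
      (show (0 : ℝ) ∈ Set.Ici (0:ℝ) by norm_num) ha0 hb0 hab
    simp only [smul_eq_mul] at this
    rw [show a * (1/2 : ℝ) + b * 0 = 1 - s by ring] at this
    exact this
  have h2' : a * (1/2 : ℝ) ^ β ≤ (1 - s) ^ β := by
    simpa [Real.zero_rpow hβ.ne'] using h2
  have hpow : (2 : ℝ) ^ β * (1/2 : ℝ) ^ β = 1 := by
    rw [← Real.mul_rpow (by norm_num) (by norm_num)]
    norm_num
  have h2β : (1 : ℝ) ≤ (2 : ℝ) ^ β := Real.one_le_rpow (by norm_num) hβ.le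
  have key : (2 ^ β - 1) * (a * (1/2 : ℝ) ^ β) ≤ (2 ^ β - 1) * (1 - s) ^ β :=
    mul_le_mul_of_nonneg_left h2' (by linarith)
  have h1' : a * (1/2 : ℝ) ^ β + b ≤ s ^ β := by simpa using h1
  nlinarith [h1', key, hpow]
end

section
/- Let X be a metric space with metric ρ, let α > 0 and 0 < β < 1, and define w(x,y) = exp(α·ρ(x,y)^β) and v(x,y) = exp(α·(2^β−1)·ρ(x,y)^β). Then for all x, y, z ∈ X, w(x,y) ≤ w(x,z)·v(z,y) + v(x,z)·w(z,y). -/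
lemma key_rpow {β : ℝ} (hβ : 0 < β) (hβ1 : β < 1) {a b : ℝ} (hb : 0 ≤ b) (hba : b ≤ a) :
    (a + b) ^ β ≤ a ^ β + (2 ^ β - 1) * b ^ β := by
  rcases eq_or_lt_of_le hb with hb0 | hb0
  · simp [← hb0, Real.zero_rpow hβ.ne']
  have ha : 0 < a := lt_of_lt_of_le hb0 hba
  have hcc := Real.concaveOn_rpow hβ.le hβ1.le
  set μ : ℝ := b / a with hμ
  have hμ0 : 0 ≤ μ := by positivity
  have hμ1 : μ ≤ 1 := (div_le_one ha).mpr hba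
  have h1 : μ • ((b:ℝ) ^ β) + (1 - μ) • ((a + b) ^ β) ≤ (μ * b + (1 - μ) * (a + b)) ^ β := by
    exact hcc.2 (Set.mem_Ici.mpr hb) (Set.mem_Ici.mpr (by positivity)) hμ0 (by linarith) (by ring)
  have h2 : (1 - μ) • ((b:ℝ) ^ β) + μ • ((a + b) ^ β) ≤ ((1 - μ) * b + μ * (a + b)) ^ β := by
    exact hcc.2 (Set.mem_Ici.mpr hb) (Set.mem_Ici.mpr (by positivity)) (by linarith) hμ0 (by ring)
  have e1 : μ * b + (1 - μ) * (a + b) = a := by rw [hμ]; field_simp; ring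
  have e2 : (1 - μ) * b + μ * (a + b) = 2 * b := by rw [hμ]; field_simp; ring
  rw [e1] at h1
  rw [e2] at h2
  have h2b : (2 * b) ^ β = 2 ^ β * b ^ β := Real.mul_rpow (by norm_num) hb
  simp only [smul_eq_mul] at h1 h2
  nlinarith [Real.rpow_nonneg hb β]

theorem stmt_2 {X : Type*} [MetricSpace X] (α β : ℝ) (hα : 0 < α) (hβ : 0 < β) (hβ1 : β < 1)
    (x y z : X) :
    Real.exp (α * dist x y ^ β) ≤
      Real.exp (α * dist x z ^ β) * Real.exp (α * (2 ^ β - 1) * dist z y ^ β) +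
        Real.exp (α * (2 ^ β - 1) * dist x z ^ β) * Real.exp (α * dist z y ^ β) := by
  set a := dist x z
  set b := dist z y
  have ha : 0 ≤ a := dist_nonneg
  have hb : 0 ≤ b := dist_nonneg
  have htri : dist x y ≤ a + b := dist_triangle x z y
  have hd : dist x y ^ β ≤ (a + b) ^ β :=
    Real.rpow_le_rpow dist_nonneg htri hβ.le
  rcases le_total b a with hba | hab
  · have hk := key_rpow hβ hβ1 hb hba
    calc Real.exp (α * dist x y ^ β)
        ≤ Real.exp (α * a ^ β + α * (2 ^ β - 1) * b ^ β) := by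
          apply Real.exp_le_exp.mpr; nlinarith
      _ = Real.exp (α * a ^ β) * Real.exp (α * (2 ^ β - 1) * b ^ β) := by
          rw [← Real.exp_add]
      _ ≤ _ := le_add_of_nonneg_right (by positivity)
  · have hk := key_rpow hβ hβ1 ha hab
    rw [add_comm a b] at hd
    calc Real.exp (α * dist x y ^ β)
        ≤ Real.exp (α * (2 ^ β - 1) * a ^ β + α * b ^ β) := by
          apply Real.exp_le_exp.mpr; nlinarith
      _ = Real.exp (α * (2 ^ β - 1) * a ^ β) * Real.exp (α * b ^ β) := by
          rw [← Real.exp_add]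
      _ ≤ _ := le_add_of_nonneg_left (by positivity)
end

section
/- For real numbers a ≥ b ≥ 0 and 0 < β < 1, one has (a+b)^β ≤ a^β + (2^β − 1)·b^β. -/
theorem stmt_4 (a b β : ℝ) (hb : 0 ≤ b) (hab : b ≤ a) (hβ : 0 < β) (hβ1 : β < 1) :
    (a + b) ^ β ≤ a ^ β + (2 ^ β - 1) * b ^ β := by
  rcases eq_or_lt_of_le hb with rfl | hb0
  · have : (0:ℝ) ≤ (2 ^ β - 1) * 0 ^ β := by
      have : (1:ℝ) ≤ 2 ^ β := Real.one_le_rpow (by norm_num) hβ.le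
      have h0 : (0:ℝ) ≤ (0:ℝ) ^ β := Real.rpow_nonneg le_rfl β
      nlinarith
    simpa using this
  set f : ℝ → ℝ := fun t => t ^ β + (2 ^ β - 1) * b ^ β - (t + b) ^ β with hf
  have key : MonotoneOn f (Set.Ici b) := by
    have hderiv : ∀ t ∈ interior (Set.Ici b),
        HasDerivAt f (β * t ^ (β - 1) - β * (t + b) ^ (β - 1)) t := by
      intro t ht
      rw [interior_Ici] at ht
      have ht0 : 0 < t := lt_of_lt_of_le hb0 ht.le
      have h1 : HasDerivAt (fun t : ℝ => t ^ β) (β * t ^ (β - 1)) t := by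
        have := Real.hasDerivAt_rpow_const (x := t) (p := β) (Or.inl ht0.ne')
        simpa [mul_comm] using this
      have h2 : HasDerivAt (fun t : ℝ => (t + b) ^ β) (β * (t + b) ^ (β - 1)) t := by
        have hi : HasDerivAt (fun t : ℝ => t + b) 1 t := (hasDerivAt_id t).add_const b
        have := (Real.hasDerivAt_rpow_const (x := t + b) (p := β)
          (Or.inl (by positivity))).comp t hi
        simpa [mul_comm, Function.comp_def] using this
      exact (h1.add_const ((2 ^ β - 1) * b ^ β)).sub h2
    apply monotoneOn_of_deriv_nonneg (convex_Ici b)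
    · simp only [hf]
      apply ContinuousOn.sub
      · exact (continuousOn_id.rpow_const (fun x hx => Or.inr hβ.le)).add continuousOn_const
      · exact (continuousOn_id.add continuousOn_const).rpow_const (fun x hx => Or.inr hβ.le)
    · intro t ht
      exact (hderiv t ht).differentiableAt.differentiableWithinAt
    · intro t ht
      rw [(hderiv t ht).deriv]
      rw [interior_Ici] at ht
      have ht0 : 0 < t := lt_of_lt_of_le hb0 ht.le
      have : (t + b) ^ (β - 1) ≤ t ^ (β - 1) :=
        Real.rpow_le_rpow_of_nonpos ht0 (by linarith) (by linarith)
      nlinarith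
  have hfb : f b = 0 := by
    have : (b + b) ^ β = 2 ^ β * b ^ β := by
      rw [← Real.mul_rpow (by norm_num) hb]; ring_nf
    simp only [hf, this]; ring
  have := key (Set.self_mem_Ici) (Set.mem_Ici.mpr hab) hab
  rw [hfb] at this
  simp only [hf] at this
  linarith
end

section
/- Let w, v : G → [1,∞) satisfy w(z) ≤ D(w(x⁻¹z)v(x) + v(x⁻¹z)w(x)) for all x, z ∈ G, and suppose ‖v·w⁻¹‖₂ ≤ D. Then for kernels A, B on G with dominating vectors ã, b̃, the product satisfies ‖AB‖_w ≤ D'·‖A‖_w·‖B‖_w, where ‖A‖_w = ‖ã·w‖₂ and D' depends only on D. In particular R_{α,β}(G) with an equivalent norm is a Banach algebra. -/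
/-- The dominating vector `ã(z) = sup_y |a(yz, y)|` of a kernel. -/
noncomputable def domVec {G : Type*} [Group G] (A : G → G → ℂ) (z : G) : ℝ :=
  ⨆ y : G, ‖A (y * z) y‖

/-- The weighted norm `‖A‖_w = ‖ã·w‖₂`. -/
noncomputable def normW {G : Type*} [Group G] (w : G → ℝ) (A : G → G → ℂ) : ℝ :=
  Real.sqrt (∑' z : G, (domVec A z * w z) ^ 2)

/-- Membership: the dominating vector is well defined, with `ã·w ∈ ℓ²`. -/
def MemW {G : Type*} [Group G] (w : G → ℝ) (A : G → G → ℂ) : Prop :=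
  (∀ z : G, BddAbove (Set.range fun y : G => ‖A (y * z) y‖)) ∧
  Summable (fun z : G => (domVec A z * w z) ^ 2)

/-- The product kernel `(AB)(x,y) = ∑_z A(x,z)·B(z,y)`. -/
noncomputable def kmul {G : Type*} (A B : G → G → ℂ) (x y : G) : ℂ :=
  ∑' z : G, A x z * B z y

open MeasureTheory ENNReal

private lemma r2 (x : ℝ≥0∞) : x ^ (2:ℝ) = x ^ 2 := by
  rw [← ENNReal.rpow_natCast x 2]; norm_num

private lemma s2 (x : ℝ≥0∞) : (x ^ (1/2:ℝ)) ^ 2 = x := by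
  rw [← ENNReal.rpow_natCast (x ^ (1/2:ℝ)) 2, ← ENNReal.rpow_mul]
  norm_num

private lemma ecs {G : Type*} [Countable G] (p q : G → ℝ≥0∞) :
    (∑' u, p u * q u) ^ 2 ≤ (∑' u, p u ^ 2) * (∑' u, q u ^ 2) := by
  letI : MeasurableSpace G := ⊤
  haveI : MeasurableSingletonClass G := ⟨fun _ => trivial⟩
  have h := ENNReal.lintegral_mul_le_Lp_mul_Lq (Measure.count : Measure G)
    (⟨by norm_num, by norm_num, by norm_num⟩ : Real.HolderConjugate 2 2)
    (f := p) (g := q) (measurable_from_top (f := p)).aemeasurable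
    (measurable_from_top (f := q)).aemeasurable
  simp only [lintegral_count, Pi.mul_apply] at h
  calc (∑' u, p u * q u) ^ 2
      ≤ ((∑' u, p u ^ (2:ℝ)) ^ (1/2:ℝ) * (∑' u, q u ^ (2:ℝ)) ^ (1/2:ℝ)) ^ 2 := by
        gcongr
    _ = (∑' u, p u ^ 2) * (∑' u, q u ^ 2) := by
        rw [mul_pow, s2, s2]
        simp only [r2]

private lemma young {G : Type*} [Countable G] (M K : G → ℝ≥0∞) (e : G → G ≃ G) :
    ∑' z : G, (∑' u : G, M (e u z) * K u) ^ 2 ≤ (∑' u, K u) ^ 2 * ∑' z, M z ^ 2 := by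
  have step : ∀ z, (∑' u, M (e u z) * K u) ^ 2
      ≤ (∑' u, M (e u z) ^ 2 * K u) * (∑' u, K u) := by
    intro z
    have h1 : ∀ u, M (e u z) * K u
        = (M (e u z) * K u ^ (1/2:ℝ)) * (K u ^ (1/2:ℝ)) := by
      intro u; rw [mul_assoc, ← sq, s2]
    calc (∑' u, M (e u z) * K u) ^ 2
        = (∑' u, (M (e u z) * K u ^ (1/2:ℝ)) * (K u ^ (1/2:ℝ))) ^ 2 := by
          rw [tsum_congr h1]
      _ ≤ (∑' u, (M (e u z) * K u ^ (1/2:ℝ)) ^ 2) * (∑' u, (K u ^ (1/2:ℝ)) ^ 2) :=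
          ecs _ _
      _ = (∑' u, M (e u z) ^ 2 * K u) * (∑' u, K u) := by
          congr 1
          · exact tsum_congr fun u => by rw [mul_pow, s2]
          · exact tsum_congr fun u => s2 _
  calc ∑' z, (∑' u, M (e u z) * K u) ^ 2
      ≤ ∑' z, (∑' u, M (e u z) ^ 2 * K u) * (∑' u, K u) := ENNReal.tsum_le_tsum step
    _ = (∑' z, ∑' u, M (e u z) ^ 2 * K u) * (∑' u, K u) := ENNReal.tsum_mul_right
    _ = (∑' u, ∑' z, M (e u z) ^ 2 * K u) * (∑' u, K u) := by rw [ENNReal.tsum_comm]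
    _ = (∑' u : G, (∑' z, M z ^ 2) * K u) * (∑' u, K u) := by
        congr 1
        refine tsum_congr fun u => ?_
        rw [ENNReal.tsum_mul_right, (e u).tsum_eq (fun z => M z ^ 2)]
    _ = (∑' u, K u) ^ 2 * ∑' z, M z ^ 2 := by
        rw [ENNReal.tsum_mul_left]; ring

private lemma sq3 (x y : ℝ≥0∞) : (x + y) ^ 2 ≤ 3 * (x ^ 2 + y ^ 2) := by
  have hxy : x * y ≤ x ^ 2 + y ^ 2 := by
    rcases le_total x y with h | h
    · calc x * y ≤ y * y := mul_le_mul_left h y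
        _ = y ^ 2 := (sq y).symm
        _ ≤ x ^ 2 + y ^ 2 := le_add_self
    · calc x * y ≤ x * x := mul_le_mul_right h x
        _ = x ^ 2 := (sq x).symm
        _ ≤ x ^ 2 + y ^ 2 := le_self_add
  calc (x + y) ^ 2 = x ^ 2 + y ^ 2 + 2 * (x * y) := by ring
    _ ≤ x ^ 2 + y ^ 2 + 2 * (x ^ 2 + y ^ 2) := by gcongr
    _ = 3 * (x ^ 2 + y ^ 2) := by ring

/-- submultiplicativity of the weighted norm, with a constant
depending only on `D`. -/
theorem stmt_10 {G : Type*} [Group G] [Countable G] (D : ℝ) (hD : 0 < D) :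
    ∃ D' : ℝ, 0 < D' ∧
      ∀ w v : G → ℝ, (∀ z, 1 ≤ w z) → (∀ z, 1 ≤ v z) →
        (∀ x z : G, w z ≤ D * (w (x⁻¹ * z) * v x + v (x⁻¹ * z) * w x)) →
        Summable (fun z : G => (v z / w z) ^ 2) →
        Real.sqrt (∑' z : G, (v z / w z) ^ 2) ≤ D →
        ∀ A B : G → G → ℂ, MemW w A → MemW w B →
          normW w (kmul A B) ≤ D' * normW w A * normW w B := by
  refine ⟨3 * D ^ 2, by positivity, ?_⟩
  intro w v hw hv hwD hsr hDr A B hA hB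
  obtain ⟨hAb, hAs⟩ := hA
  obtain ⟨hBb, hBs⟩ := hB
  set a := domVec A with ha
  set b := domVec B with hb
  set c := domVec (kmul A B) with hc
  have hw0 : ∀ z, 0 ≤ w z := fun z => zero_le_one.trans (hw z)
  have hv0 : ∀ z, 0 ≤ v z := fun z => zero_le_one.trans (hv z)
  have ha0 : ∀ z, 0 ≤ a z := fun z =>
    (norm_nonneg (A (1 * z) 1)).trans (le_ciSup (hAb z) (1 : G))
  have hb0 : ∀ z, 0 ≤ b z := fun z =>
    (norm_nonneg (B (1 * z) 1)).trans (le_ciSup (hBb z) (1 : G))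
  have haA : ∀ x t : G, ‖A x t‖ ≤ a (t⁻¹ * x) := by
    intro x t
    have h := le_ciSup (hAb (t⁻¹ * x)) t
    simpa [ha, domVec] using h
  have hbB : ∀ x t : G, ‖B x t‖ ≤ b (t⁻¹ * x) := by
    intro x t
    have h := le_ciSup (hBb (t⁻¹ * x)) t
    simpa [hb, domVec] using h
  -- a², b² summable
  have hsa2 : Summable fun z => a z ^ 2 :=
    Summable.of_nonneg_of_le (fun z => sq_nonneg _)
      (fun z => pow_le_pow_left₀ (ha0 z) (le_mul_of_one_le_right (ha0 z) (hw z)) 2) hAs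
  have hsb2 : Summable fun z => b z ^ 2 :=
    Summable.of_nonneg_of_le (fun z => sq_nonneg _)
      (fun z => pow_le_pow_left₀ (hb0 z) (le_mul_of_one_le_right (hb0 z) (hw z)) 2) hBs
  have hsaz : ∀ z : G, Summable fun u => a (u⁻¹ * z) ^ 2 := by
    intro z
    have h := ((Equiv.inv G).trans (Equiv.mulRight z)).summable_iff.mpr hsa2
    simpa [Function.comp_def] using h
  have hsab : ∀ z : G, Summable fun u => a (u⁻¹ * z) * b u := by
    intro z
    refine Summable.of_nonneg_of_le (fun u => mul_nonneg (ha0 _) (hb0 _))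
      (fun u => ?_) ((hsaz z).add hsb2)
    nlinarith [sq_nonneg (a (u⁻¹ * z) - b u), mul_nonneg (ha0 (u⁻¹ * z)) (hb0 u)]
  set S : G → ℝ := fun z => ∑' u, a (u⁻¹ * z) * b u with hS
  have hS0 : ∀ z, 0 ≤ S z := fun z => tsum_nonneg fun u => mul_nonneg (ha0 _) (hb0 _)
  -- the dominating kernel sum, shifted
  have hshift : ∀ y z : G,
      Summable (fun t => a (t⁻¹ * (y * z)) * b (y⁻¹ * t)) ∧
      (∑' t, a (t⁻¹ * (y * z)) * b (y⁻¹ * t)) = S z := by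
    intro y z
    have hcomp : ((fun t => a (t⁻¹ * (y * z)) * b (y⁻¹ * t)) ∘ (Equiv.mulLeft y))
        = fun u => a (u⁻¹ * z) * b u := by
      funext u
      simp [Function.comp, mul_inv_rev, mul_assoc]
    constructor
    · exact (Equiv.mulLeft y).summable_iff.mp (by rw [hcomp]; exact hsab z)
    · rw [← (Equiv.mulLeft y).tsum_eq (fun t => a (t⁻¹ * (y * z)) * b (y⁻¹ * t))]
      exact tsum_congr fun u => by
        have := congrFun hcomp u
        simpa [Function.comp] using this
  have hnormsum : ∀ y z : G, Summable fun t => ‖A (y * z) t * B t y‖ := by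
    intro y z
    refine Summable.of_nonneg_of_le (fun t => norm_nonneg _) (fun t => ?_) (hshift y z).1
    rw [norm_mul]
    exact mul_le_mul (haA _ _) (hbB _ _) (norm_nonneg _) (ha0 _)
  have hCS : ∀ z y : G, ‖kmul A B (y * z) y‖ ≤ S z := by
    intro z y
    calc ‖kmul A B (y * z) y‖ ≤ ∑' t, ‖A (y * z) t * B t y‖ :=
          norm_tsum_le_tsum_norm (hnormsum y z)
      _ ≤ ∑' t, a (t⁻¹ * (y * z)) * b (y⁻¹ * t) := by
          refine Summable.tsum_le_tsum (fun t => ?_) (hnormsum y z) (hshift y z).1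
          rw [norm_mul]
          exact mul_le_mul (haA _ _) (hbB _ _) (norm_nonneg _) (ha0 _)
      _ = S z := (hshift y z).2
  have hbddC : ∀ z, BddAbove (Set.range fun y : G => ‖kmul A B (y * z) y‖) := by
    intro z
    refine ⟨S z, ?_⟩
    rintro x ⟨y, rfl⟩
    exact hCS z y
  have hc0 : ∀ z, 0 ≤ c z := fun z =>
    (norm_nonneg (kmul A B (1 * z) 1)).trans (le_ciSup (hbddC z) (1 : G))
  have hcS : ∀ z, c z ≤ S z := fun z => ciSup_le (hCS z)
  -- ENNReal setup
  set F : G → ℝ≥0∞ := fun u => ENNReal.ofReal (a u * w u) with hF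
  set Gg : G → ℝ≥0∞ := fun u => ENNReal.ofReal (b u * w u) with hGg
  set F' : G → ℝ≥0∞ := fun u => ENNReal.ofReal (a u * v u) with hF'
  set G' : G → ℝ≥0∞ := fun u => ENNReal.ofReal (b u * v u) with hG'
  set r : G → ℝ≥0∞ := fun u => ENNReal.ofReal (v u / w u) with hr
  set P : G → ℝ≥0∞ := fun z => ∑' u, F (u⁻¹ * z) * G' u with hP
  set Q : G → ℝ≥0∞ := fun z => ∑' u, F' (u⁻¹ * z) * Gg u with hQ
  set ED : ℝ≥0∞ := ENNReal.ofReal D with hED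
  set NA : ℝ≥0∞ := ∑' u, F u ^ 2 with hNA
  set NB : ℝ≥0∞ := ∑' u, Gg u ^ 2 with hNB
  set R : ℝ≥0∞ := ∑' u, r u ^ 2 with hR
  -- key pointwise bound
  have key : ∀ z : G, ENNReal.ofReal (c z * w z) ≤ ED * (P z + Q z) := by
    intro z
    have h1 : c z * w z ≤ S z * w z := mul_le_mul_of_nonneg_right (hcS z) (hw0 z)
    refine (ENNReal.ofReal_le_ofReal h1).trans ?_
    have h2 : ENNReal.ofReal (S z * w z)
        = ∑' u, ENNReal.ofReal (a (u⁻¹ * z) * b u * w z) := by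
      rw [hS]
      rw [← tsum_mul_right]
      exact ENNReal.ofReal_tsum_of_nonneg
        (fun u => mul_nonneg (mul_nonneg (ha0 _) (hb0 _)) (hw0 z))
        ((hsab z).mul_right (w z))
    rw [h2]
    have h3 : ∀ u : G, ENNReal.ofReal (a (u⁻¹ * z) * b u * w z)
        ≤ ED * (F (u⁻¹ * z) * G' u + F' (u⁻¹ * z) * Gg u) := by
      intro u
      have hab : (0:ℝ) ≤ a (u⁻¹ * z) * b u := mul_nonneg (ha0 _) (hb0 _)
      have hreal : a (u⁻¹ * z) * b u * w z
          ≤ D * ((a (u⁻¹ * z) * w (u⁻¹ * z)) * (b u * v u)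
              + (a (u⁻¹ * z) * v (u⁻¹ * z)) * (b u * w u)) := by
        calc a (u⁻¹ * z) * b u * w z
            ≤ (a (u⁻¹ * z) * b u) * (D * (w (u⁻¹ * z) * v u + v (u⁻¹ * z) * w u)) :=
              mul_le_mul_of_nonneg_left (hwD u z) hab
          _ = D * ((a (u⁻¹ * z) * w (u⁻¹ * z)) * (b u * v u)
              + (a (u⁻¹ * z) * v (u⁻¹ * z)) * (b u * w u)) := by ring
      calc ENNReal.ofReal (a (u⁻¹ * z) * b u * w z)
          ≤ ENNReal.ofReal (D * ((a (u⁻¹ * z) * w (u⁻¹ * z)) * (b u * v u)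
              + (a (u⁻¹ * z) * v (u⁻¹ * z)) * (b u * w u))) :=
            ENNReal.ofReal_le_ofReal hreal
        _ = ED * (F (u⁻¹ * z) * G' u + F' (u⁻¹ * z) * Gg u) := by
            rw [ENNReal.ofReal_mul hD.le,
              ENNReal.ofReal_add
                (mul_nonneg (mul_nonneg (ha0 _) (hw0 _)) (mul_nonneg (hb0 _) (hv0 _)))
                (mul_nonneg (mul_nonneg (ha0 _) (hv0 _)) (mul_nonneg (hb0 _) (hw0 _))),
              ENNReal.ofReal_mul (mul_nonneg (ha0 _) (hw0 _)),
              ENNReal.ofReal_mul (mul_nonneg (ha0 _) (hv0 _))]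
    calc ∑' u, ENNReal.ofReal (a (u⁻¹ * z) * b u * w z)
        ≤ ∑' u, ED * (F (u⁻¹ * z) * G' u + F' (u⁻¹ * z) * Gg u) :=
          ENNReal.tsum_le_tsum h3
      _ = ED * (P z + Q z) := by rw [ENNReal.tsum_mul_left, ENNReal.tsum_add]
  -- Young bounds
  have hPsq : ∑' z, P z ^ 2 ≤ (∑' u, G' u) ^ 2 * NA := by
    have h := young F G' (fun u : G => Equiv.mulLeft u⁻¹)
    simpa [hP, hNA] using h
  have hQeq : ∀ z : G, Q z = ∑' s : G, Gg (z * s⁻¹) * F' s := by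
    intro z
    simp only [hQ]
    rw [← ((Equiv.inv G).trans (Equiv.mulLeft z)).tsum_eq (fun u => F' (u⁻¹ * z) * Gg u)]
    refine tsum_congr fun s => ?_
    simp [mul_inv_rev, mul_assoc, mul_comm]
  have hQsq : ∑' z, Q z ^ 2 ≤ (∑' u, F' u) ^ 2 * NB := by
    have h := young Gg F' (fun s : G => Equiv.mulRight s⁻¹)
    calc ∑' z, Q z ^ 2 = ∑' z : G, (∑' s : G, Gg (z * s⁻¹) * F' s) ^ 2 :=
          tsum_congr fun z => by rw [hQeq z]
      _ ≤ (∑' u, F' u) ^ 2 * NB := by simpa [hNB] using h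
  -- Cauchy–Schwarz bounds on ℓ¹ norms
  have hG'r : ∀ u, G' u = Gg u * r u := by
    intro u
    have hwu : w u ≠ 0 := by have := hw u; linarith
    have hbv : b u * v u = (b u * w u) * (v u / w u) := by field_simp
    simp only [hG', hGg, hr]
    rw [hbv, ENNReal.ofReal_mul (mul_nonneg (hb0 u) (hw0 u))]
  have hF'r : ∀ u, F' u = F u * r u := by
    intro u
    have hwu : w u ≠ 0 := by have := hw u; linarith
    have hav : a u * v u = (a u * w u) * (v u / w u) := by field_simp
    simp only [hF', hF, hr]
    rw [hav, ENNReal.ofReal_mul (mul_nonneg (ha0 u) (hw0 u))]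
  have hRD : R ≤ ED ^ 2 := by
    have h0 : 0 ≤ ∑' z : G, (v z / w z) ^ 2 := tsum_nonneg fun z => sq_nonneg _
    have h1 : (∑' z : G, (v z / w z) ^ 2) ≤ D ^ 2 := by
      calc (∑' z : G, (v z / w z) ^ 2) = Real.sqrt (∑' z : G, (v z / w z) ^ 2) ^ 2 :=
            (Real.sq_sqrt h0).symm
        _ ≤ D ^ 2 := pow_le_pow_left₀ (Real.sqrt_nonneg _) hDr 2
    have h2 : R = ENNReal.ofReal (∑' z : G, (v z / w z) ^ 2) := by
      rw [ENNReal.ofReal_tsum_of_nonneg (fun z => sq_nonneg _) hsr]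
      simp only [hR, hr]
      exact tsum_congr fun u => (ENNReal.ofReal_pow (div_nonneg (hv0 u) (hw0 u)) 2).symm
    rw [h2, hED, ← ENNReal.ofReal_pow hD.le]
    exact ENNReal.ofReal_le_ofReal h1
  have hG'sq : (∑' u, G' u) ^ 2 ≤ NB * ED ^ 2 := by
    calc (∑' u, G' u) ^ 2 = (∑' u, Gg u * r u) ^ 2 := by rw [tsum_congr hG'r]
      _ ≤ NB * R := ecs Gg r
      _ ≤ NB * ED ^ 2 := mul_le_mul_right hRD NB
  have hF'sq : (∑' u, F' u) ^ 2 ≤ NA * ED ^ 2 := by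
    calc (∑' u, F' u) ^ 2 = (∑' u, F u * r u) ^ 2 := by rw [tsum_congr hF'r]
      _ ≤ NA * R := ecs F r
      _ ≤ NA * ED ^ 2 := mul_le_mul_right hRD NA
  -- main ENNReal estimate
  have main : ∑' z, (ENNReal.ofReal (c z * w z)) ^ 2 ≤ 6 * ED ^ 2 * ED ^ 2 * (NA * NB) := by
    calc ∑' z, (ENNReal.ofReal (c z * w z)) ^ 2
        ≤ ∑' z, (ED * (P z + Q z)) ^ 2 := by
          refine ENNReal.tsum_le_tsum fun z => ?_
          gcongr
          exact key z
      _ = ED ^ 2 * ∑' z, (P z + Q z) ^ 2 := by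
          rw [← ENNReal.tsum_mul_left]
          exact tsum_congr fun z => by rw [mul_pow]
      _ ≤ ED ^ 2 * ∑' z, 3 * (P z ^ 2 + Q z ^ 2) :=
          mul_le_mul_right (ENNReal.tsum_le_tsum fun z => sq3 _ _) _
      _ = 3 * ED ^ 2 * (∑' z, P z ^ 2 + ∑' z, Q z ^ 2) := by
          rw [ENNReal.tsum_mul_left, ENNReal.tsum_add]; ring
      _ ≤ 3 * ED ^ 2 * ((∑' u, G' u) ^ 2 * NA + (∑' u, F' u) ^ 2 * NB) :=
          mul_le_mul_right (add_le_add hPsq hQsq) _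
      _ ≤ 3 * ED ^ 2 * ((NB * ED ^ 2) * NA + (NA * ED ^ 2) * NB) :=
          mul_le_mul_right (add_le_add (mul_le_mul_left hG'sq NA)
            (mul_le_mul_left hF'sq NB)) _
      _ = 6 * ED ^ 2 * ED ^ 2 * (NA * NB) := by ring
  -- identify NA, NB
  have hNAeq : NA = ENNReal.ofReal (∑' z : G, (a z * w z) ^ 2) := by
    rw [ENNReal.ofReal_tsum_of_nonneg (fun z => sq_nonneg _) hAs]
    simp only [hNA, hF]
    exact tsum_congr fun u =>
      (ENNReal.ofReal_pow (mul_nonneg (ha0 u) (hw0 u)) 2).symm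
  have hNBeq : NB = ENNReal.ofReal (∑' z : G, (b z * w z) ^ 2) := by
    rw [ENNReal.ofReal_tsum_of_nonneg (fun z => sq_nonneg _) hBs]
    simp only [hNB, hGg]
    exact tsum_congr fun u =>
      (ENNReal.ofReal_pow (mul_nonneg (hb0 u) (hw0 u)) 2).symm
  have hSA0 : 0 ≤ ∑' z : G, (a z * w z) ^ 2 := tsum_nonneg fun z => sq_nonneg _
  have hSB0 : 0 ≤ ∑' z : G, (b z * w z) ^ 2 := tsum_nonneg fun z => sq_nonneg _
  set M : ℝ := 6 * D ^ 2 * D ^ 2 *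
      ((∑' z : G, (a z * w z) ^ 2) * ∑' z : G, (b z * w z) ^ 2) with hM
  have hM0 : 0 ≤ M := by
    rw [hM]
    have : (0:ℝ) ≤ 6 * D ^ 2 * D ^ 2 := by positivity
    exact mul_nonneg this (mul_nonneg hSA0 hSB0)
  have hMeq : (6 * ED ^ 2 * ED ^ 2 * (NA * NB) : ℝ≥0∞) = ENNReal.ofReal M := by
    rw [hM, ENNReal.ofReal_mul (by positivity : (0:ℝ) ≤ 6 * D ^ 2 * D ^ 2),
      ENNReal.ofReal_mul (by positivity : (0:ℝ) ≤ 6 * D ^ 2),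
      ENNReal.ofReal_mul (by norm_num : (0:ℝ) ≤ 6),
      ENNReal.ofReal_mul hSA0, hED, ← ENNReal.ofReal_pow hD.le,
      ← hNAeq, ← hNBeq]
    norm_num
  have hofg : ∀ z, ENNReal.ofReal ((c z * w z) ^ 2) = (ENNReal.ofReal (c z * w z)) ^ 2 :=
    fun z => ENNReal.ofReal_pow (mul_nonneg (hc0 z) (hw0 z)) 2
  have hne : (∑' z, ENNReal.ofReal ((c z * w z) ^ 2)) ≠ ⊤ := by
    rw [tsum_congr hofg]
    exact ne_top_of_le_ne_top ENNReal.ofReal_ne_top (le_of_le_of_eq main hMeq)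
  have hsg : Summable fun z : G => (c z * w z) ^ 2 :=
    (ENNReal.summable_toReal hne).congr fun z => by
      rw [ENNReal.toReal_ofReal (sq_nonneg _)]
  have hfinle : (∑' z : G, (c z * w z) ^ 2) ≤ M := by
    rw [← ENNReal.ofReal_le_ofReal_iff hM0,
      ENNReal.ofReal_tsum_of_nonneg (fun z => sq_nonneg _) hsg,
      tsum_congr hofg, ← hMeq]
    exact main
  -- finish in ℝ
  show Real.sqrt (∑' z : G, (c z * w z) ^ 2)
      ≤ 3 * D ^ 2 * Real.sqrt (∑' z : G, (a z * w z) ^ 2)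
        * Real.sqrt (∑' z : G, (b z * w z) ^ 2)
  have hM9 : M ≤ (3 * D ^ 2 * Real.sqrt (∑' z : G, (a z * w z) ^ 2)
      * Real.sqrt (∑' z : G, (b z * w z) ^ 2)) ^ 2 := by
    have e1 : Real.sqrt (∑' z : G, (a z * w z) ^ 2) ^ 2 = ∑' z : G, (a z * w z) ^ 2 :=
      Real.sq_sqrt hSA0
    have e2 : Real.sqrt (∑' z : G, (b z * w z) ^ 2) ^ 2 = ∑' z : G, (b z * w z) ^ 2 :=
      Real.sq_sqrt hSB0
    have e3 : Real.sqrt (∑' z : G, (a z * w z) ^ 2) ^ 2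
        * Real.sqrt (∑' z : G, (b z * w z) ^ 2) ^ 2
        = (∑' z : G, (a z * w z) ^ 2) * ∑' z : G, (b z * w z) ^ 2 := by
      rw [e1, e2]
    have hx : 0 ≤ D ^ 2 * D ^ 2 *
        ((∑' z : G, (a z * w z) ^ 2) * ∑' z : G, (b z * w z) ^ 2) :=
      mul_nonneg (by positivity) (mul_nonneg hSA0 hSB0)
    have hD4 : (0:ℝ) ≤ D ^ 2 * D ^ 2 := by positivity
    rw [hM]
    nlinarith [e3, hx, hD4]
  calc Real.sqrt (∑' z : G, (c z * w z) ^ 2)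
      ≤ Real.sqrt M := Real.sqrt_le_sqrt hfinle
    _ ≤ Real.sqrt ((3 * D ^ 2 * Real.sqrt (∑' z : G, (a z * w z) ^ 2)
        * Real.sqrt (∑' z : G, (b z * w z) ^ 2)) ^ 2) := Real.sqrt_le_sqrt hM9
    _ = 3 * D ^ 2 * Real.sqrt (∑' z : G, (a z * w z) ^ 2)
        * Real.sqrt (∑' z : G, (b z * w z) ^ 2) := Real.sqrt_sq (by positivity)
end

section
/- Let {b_n}_{n≥1} be a sequence of nonnegative reals with b_1 ≥ 1 and θ ∈ (0,1) such that b_{2n} ≤ b_n^{1+θ} and b_{2n+1} ≤ b_1·b_n^{1+θ} for all n ≥ 1. Then for every n with binary expansion n = ∑_{i=0}^k ε_i·2^i (ε_i ∈ {0,1}, ε_k = 1), one has b_n ≤ b_1^{∑_{i=0}^k ε_i(1+θ)^i}, and hence b_n ≤ b_1^{((1+θ)/θ)·(1+θ)^k} ≤ b_1^{((1+θ)/θ)·n^{log₂(1+θ)}}. -/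
/-- iterating the doubling inequalities along the binary
expansion of `n`. -/
theorem stmt_15 (b : ℕ → ℝ) (hb0 : ∀ n, 0 ≤ b n) (hb1 : 1 ≤ b 1)
    (θ : ℝ) (hθ : 0 < θ) (hθ1 : θ < 1)
    (heven : ∀ n : ℕ, 1 ≤ n → b (2 * n) ≤ b n ^ (1 + θ))
    (hodd : ∀ n : ℕ, 1 ≤ n → b (2 * n + 1) ≤ b 1 * b n ^ (1 + θ)) :
    (∀ k : ℕ, ∀ ε : ℕ → ℕ, (∀ i, ε i = 0 ∨ ε i = 1) → ε k = 1 →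
      b (∑ i ∈ Finset.range (k + 1), ε i * 2 ^ i) ≤
        b 1 ^ (∑ i ∈ Finset.range (k + 1), (ε i : ℝ) * (1 + θ) ^ i)) ∧
    (∀ k n : ℕ, 2 ^ k ≤ n → n < 2 ^ (k + 1) →
      b n ≤ b 1 ^ ((1 + θ) / θ * (1 + θ) ^ k)) ∧
    (∀ n : ℕ, 1 ≤ n →
      b n ≤ b 1 ^ ((1 + θ) / θ * (n : ℝ) ^ Real.logb 2 (1 + θ))) := by
  have hb1' : (0:ℝ) ≤ b 1 := le_trans zero_le_one hb1
  have hb1pos : (0:ℝ) < b 1 := lt_of_lt_of_le zero_lt_one hb1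
  have hθ0 : (0:ℝ) ≤ 1 + θ := by linarith
  have hmono : ∀ x y : ℝ, x ≤ y → b 1 ^ x ≤ b 1 ^ y := fun x y h =>
    Real.rpow_le_rpow_of_exponent_le hb1 h
  -- Part 1
  have part1 : ∀ k : ℕ, ∀ ε : ℕ → ℕ, (∀ i, ε i = 0 ∨ ε i = 1) → ε k = 1 →
      b (∑ i ∈ Finset.range (k + 1), ε i * 2 ^ i) ≤
        b 1 ^ (∑ i ∈ Finset.range (k + 1), (ε i : ℝ) * (1 + θ) ^ i) := by
    intro k
    induction k with
    | zero =>
      intro ε hε hεk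
      simp [hεk]
    | succ k IH =>
      intro ε hε hεk
      set ε' : ℕ → ℕ := fun i => ε (i + 1) with hε'def
      have IH' := IH ε' (fun i => hε (i + 1)) hεk
      set m : ℕ := ∑ i ∈ Finset.range (k + 1), ε' i * 2 ^ i with hm
      set S : ℝ := ∑ i ∈ Finset.range (k + 1), (ε' i : ℝ) * (1 + θ) ^ i with hS
      have hm1 : 1 ≤ m := by
        have : ε' k * 2 ^ k ≤ m :=
          Finset.single_le_sum (f := fun i => ε' i * 2 ^ i)
            (fun i _ => Nat.zero_le _) (Finset.self_mem_range_succ k)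
        have hk1 : ε' k = 1 := hεk
        calc 1 ≤ 2 ^ k := Nat.one_le_two_pow
        _ = ε' k * 2 ^ k := by rw [hk1, one_mul]
        _ ≤ m := this
      have hsumN : ∑ i ∈ Finset.range (k + 2), ε i * 2 ^ i = 2 * m + ε 0 := by
        rw [Finset.sum_range_succ']
        simp only [pow_succ, pow_zero, mul_one]
        rw [hm, Finset.mul_sum]
        congr 1
        apply Finset.sum_congr rfl
        intro i _
        ring
      have hsumR : ∑ i ∈ Finset.range (k + 2), (ε i : ℝ) * (1 + θ) ^ i =
          (1 + θ) * S + (ε 0 : ℝ) := by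
        rw [Finset.sum_range_succ']
        simp only [pow_succ, pow_zero, mul_one]
        rw [hS, Finset.mul_sum]
        congr 1
        apply Finset.sum_congr rfl
        intro i _
        ring
      have hbm : b m ^ (1 + θ) ≤ b 1 ^ (S * (1 + θ)) := by
        calc b m ^ (1 + θ) ≤ (b 1 ^ S) ^ (1 + θ) :=
              Real.rpow_le_rpow (hb0 m) IH' hθ0
        _ = b 1 ^ (S * (1 + θ)) := (Real.rpow_mul hb1' S (1 + θ)).symm
      rw [hsumN, hsumR]
      rcases hε 0 with h0 | h0
      · rw [h0]
        simp only [Nat.cast_zero, add_zero]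
        calc b (2 * m + 0) = b (2 * m) := by rw [add_zero]
        _ ≤ b m ^ (1 + θ) := heven m hm1
        _ ≤ b 1 ^ (S * (1 + θ)) := hbm
        _ = b 1 ^ ((1 + θ) * S) := by rw [mul_comm]
      · rw [h0]
        simp only [Nat.cast_one]
        calc b (2 * m + 1) ≤ b 1 * b m ^ (1 + θ) := hodd m hm1
        _ ≤ b 1 * b 1 ^ (S * (1 + θ)) := by
            have := hbm
            nlinarith [Real.rpow_nonneg hb1' (S * (1 + θ))]
        _ = b 1 ^ ((1:ℝ) + S * (1 + θ)) := by
            rw [Real.rpow_add hb1pos, Real.rpow_one]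
        _ = b 1 ^ ((1 + θ) * S + 1) := by ring_nf
  -- auxiliary tight bound for part 2
  have aux : ∀ k : ℕ, ∀ n : ℕ, 2 ^ k ≤ n → n < 2 ^ (k + 1) →
      b n ≤ b 1 ^ (((1 + θ) ^ (k + 1) - 1) / θ) := by
    intro k
    induction k with
    | zero =>
      intro n h1 h2
      interval_cases n
      have : ((1 + θ) ^ (0 + 1) - 1) / θ = 1 := by
        field_simp
        ring
      rw [this, Real.rpow_one]
    | succ k IH =>
      intro n h1 h2
      have hm1 : 2 ^ k ≤ n / 2 := by
        rw [Nat.le_div_iff_mul_le (by norm_num)]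
        calc 2 ^ k * 2 = 2 ^ (k + 1) := by ring
        _ ≤ n := h1
      have hm2 : n / 2 < 2 ^ (k + 1) := by
        rw [Nat.div_lt_iff_lt_mul (by norm_num)]
        calc n < 2 ^ (k + 2) := h2
        _ = 2 ^ (k + 1) * 2 := by ring
      have IH' := IH (n / 2) hm1 hm2
      have hpos : 1 ≤ n / 2 := le_trans Nat.one_le_two_pow hm1
      set E : ℝ := ((1 + θ) ^ (k + 1) - 1) / θ with hE
      have hbm : b (n / 2) ^ (1 + θ) ≤ b 1 ^ (E * (1 + θ)) := by
        calc b (n / 2) ^ (1 + θ) ≤ (b 1 ^ E) ^ (1 + θ) :=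
              Real.rpow_le_rpow (hb0 _) IH' hθ0
        _ = b 1 ^ (E * (1 + θ)) := (Real.rpow_mul hb1' E (1 + θ)).symm
      have hn : n = 2 * (n / 2) + n % 2 := (Nat.div_add_mod n 2).symm
      rcases Nat.mod_two_eq_zero_or_one n with h | h
      · have hne : n = 2 * (n / 2) := by omega
        calc b n = b (2 * (n / 2)) := by rw [← hne]
        _ ≤ b (n / 2) ^ (1 + θ) := heven _ hpos
        _ ≤ b 1 ^ (E * (1 + θ)) := hbm
        _ ≤ b 1 ^ (((1 + θ) ^ (k + 1 + 1) - 1) / θ) := by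
            apply hmono
            rw [hE]
            rw [div_mul_eq_mul_div, div_le_div_iff₀ hθ hθ]
            ring_nf
            nlinarith [pow_nonneg hθ0 (k+1)]
      · have hne : n = 2 * (n / 2) + 1 := by omega
        calc b n = b (2 * (n / 2) + 1) := by rw [← hne]
        _ ≤ b 1 * b (n / 2) ^ (1 + θ) := hodd _ hpos
        _ ≤ b 1 * b 1 ^ (E * (1 + θ)) := by
            nlinarith [Real.rpow_nonneg hb1' (E * (1 + θ))]
        _ = b 1 ^ ((1:ℝ) + E * (1 + θ)) := by
            rw [Real.rpow_add hb1pos, Real.rpow_one]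
        _ ≤ b 1 ^ (((1 + θ) ^ (k + 1 + 1) - 1) / θ) := by
            apply hmono
            rw [hE]
            rw [div_mul_eq_mul_div, le_div_iff₀ hθ, add_mul, div_mul_cancel₀ _ (ne_of_gt hθ)]
            ring_nf
            linarith
  have part2 : ∀ k n : ℕ, 2 ^ k ≤ n → n < 2 ^ (k + 1) →
      b n ≤ b 1 ^ ((1 + θ) / θ * (1 + θ) ^ k) := by
    intro k n h1 h2
    calc b n ≤ b 1 ^ (((1 + θ) ^ (k + 1) - 1) / θ) := aux k n h1 h2
    _ ≤ b 1 ^ ((1 + θ) / θ * (1 + θ) ^ k) := by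
        apply hmono
        rw [div_le_iff₀ hθ] at *
        rw [div_mul_eq_mul_div, div_mul_cancel₀ _ (ne_of_gt hθ)]
        have : (1 + θ) * (1 + θ) ^ k = (1 + θ) ^ (k + 1) := by ring
        linarith [this]
  refine ⟨part1, part2, ?_⟩
  intro n hn
  set k : ℕ := Nat.log 2 n with hk
  have h1 : 2 ^ k ≤ n := Nat.pow_log_le_self 2 (by omega)
  have h2 : n < 2 ^ (k + 1) := Nat.lt_pow_succ_log_self (by norm_num) n
  have hc : (0:ℝ) ≤ Real.logb 2 (1 + θ) :=
    Real.logb_nonneg (by norm_num) (by linarith)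
  have key : ((1 + θ) : ℝ) ^ k ≤ (n : ℝ) ^ Real.logb 2 (1 + θ) := by
    have h2c : (2:ℝ) ^ Real.logb 2 (1 + θ) = 1 + θ :=
      Real.rpow_logb (by norm_num) (by norm_num) (by linarith)
    have : ((1 + θ) : ℝ) ^ k = ((2:ℝ) ^ (k:ℕ)) ^ Real.logb 2 (1 + θ) := by
      rw [← Real.rpow_natCast (2:ℝ) k, ← Real.rpow_mul (by norm_num), mul_comm,
        Real.rpow_mul (by norm_num), h2c, Real.rpow_natCast]
    rw [this]
    apply Real.rpow_le_rpow (by positivity) _ hc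
    exact_mod_cast h1
  calc b n ≤ b 1 ^ ((1 + θ) / θ * (1 + θ) ^ k) := part2 k n h1 h2
  _ ≤ b 1 ^ ((1 + θ) / θ * (n : ℝ) ^ Real.logb 2 (1 + θ)) := by
      apply hmono
      apply mul_le_mul_of_nonneg_left key (by positivity)
end

section
/- Let A be a Banach algebra with norm ‖·‖_A continuously embedded in B(ℓ²) with norms satisfying ‖Aⁿ‖_A ≤ C·(C·‖A‖_A·‖A‖⁻¹)^{((1+θ)/θ)·n^{log₂(1+θ)}}·‖A‖ⁿ for all n ≥ 1, where ‖·‖ is the operator norm and θ ∈ (0,1). If B ∈ A with ‖B‖ < 1, then the Neumann series ∑_{n≥0} Bⁿ converges absolutely in ‖·‖_A, so (I − B)⁻¹ ∈ A. -/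
open Filter Real Asymptotics Topology

/-- if the Banach-algebra norms of the powers `Bⁿ` satisfy the
subexponential bound coming from the operator norm `b = ‖B‖_{B(ℓ²)} < 1`, then
the Neumann series converges absolutely in the algebra norm, and `1 − B` is
invertible in the algebra. -/
theorem stmt_16 {𝒜 : Type*} [NormedRing 𝒜] [CompleteSpace 𝒜]
    (B : 𝒜) (C b θ : ℝ) (hC : 0 < C) (hb0 : 0 < b) (hb1 : b < 1)
    (hθ : 0 < θ) (hθ1 : θ < 1)
    (hpow : ∀ n : ℕ, 1 ≤ n →
      ‖B ^ n‖ ≤ C * (C * ‖B‖ * b⁻¹) ^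
          ((1 + θ) / θ * (n : ℝ) ^ Real.logb 2 (1 + θ)) * b ^ n) :
    Summable (fun n : ℕ => ‖B ^ n‖) ∧ IsUnit (1 - B) := by
  have hsum : Summable (fun n : ℕ => ‖B ^ n‖) := by
    rcases eq_or_lt_of_le (norm_nonneg B) with hB0 | hB0
    · have hB : B = 0 := by simpa using (norm_eq_zero.mp hB0.symm)
      subst hB
      apply (summable_nat_add_iff 1).mp
      simpa using summable_zero
    · set r : ℝ := C * ‖B‖ * b⁻¹ with hr
      have hr0 : 0 < r := by positivity
      set α : ℝ := Real.logb 2 (1 + θ) with hα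
      set c : ℝ := (1 + θ) / θ with hc
      set ρ : ℝ := (1 + b) / 2 with hρ
      have hρ0 : 0 < ρ := by positivity
      have hbρ : b < ρ := by rw [hρ]; linarith
      have hρ1 : ρ < 1 := by rw [hρ]; linarith
      have hα1 : α < 1 := by
        calc α < Real.logb 2 2 := Real.logb_lt_logb (by norm_num) (by linarith) (by linarith)
        _ = 1 := Real.logb_self_eq_one (by norm_num)
      have hL : Real.log (b / ρ) < 0 :=
        Real.log_neg (by positivity) ((div_lt_one hρ0).mpr hbρ)
      have hinner : Tendsto (fun x : ℝ => c * Real.log r * x ^ (α - 1) + Real.log (b / ρ))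
          atTop (𝓝 (Real.log (b / ρ))) := by
        have := (tendsto_rpow_neg_atTop (by linarith : (0:ℝ) < -(α - 1))).const_mul
          (c * Real.log r)
        simpa using (this.add_const (Real.log (b / ρ)))
      have hg : Tendsto (fun x : ℝ => c * x ^ α * Real.log r + x * Real.log (b / ρ))
          atTop atBot := by
        have h1 : Tendsto (fun x : ℝ =>
            x * (c * Real.log r * x ^ (α - 1) + Real.log (b / ρ))) atTop atBot :=
          tendsto_id.atTop_mul_neg hL hinner
        apply h1.congr'
        filter_upwards [eventually_gt_atTop (0:ℝ)] with x hx
        have hxpow : x ^ (α - 1) * x = x ^ α := by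
          calc x ^ (α - 1) * x = x ^ (α - 1) * x ^ (1:ℝ) := by rw [Real.rpow_one]
            _ = x ^ (α - 1 + 1) := (Real.rpow_add hx _ _).symm
            _ = x ^ α := by norm_num
        rw [mul_add]
        congr 1
        rw [← hxpow]; ring
      have hten : Tendsto (fun n : ℕ => C * r ^ (c * (n:ℝ) ^ α) * (b / ρ) ^ n)
          atTop (𝓝 0) := by
        have hexp : Tendsto (fun n : ℕ => C * Real.exp
            (c * (n:ℝ) ^ α * Real.log r + (n:ℝ) * Real.log (b / ρ))) atTop (𝓝 (C * 0)) :=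
          (Real.tendsto_exp_atBot.comp (hg.comp tendsto_natCast_atTop_atTop)).const_mul C
        rw [show (0:ℝ) = C * 0 by ring]
        apply hexp.congr
        intro n
        rw [Real.exp_add, Real.rpow_def_of_pos hr0, Real.exp_nat_mul,
          Real.exp_log (by positivity : (0:ℝ) < b / ρ),
          mul_comm (Real.log r) (c * (n:ℝ) ^ α)]
        ring
      have hev : ∀ᶠ n : ℕ in atTop, ‖B ^ n‖ ≤ ρ ^ n := by
        filter_upwards [hten.eventually_le_const (by norm_num : (0:ℝ) < 1),
          eventually_ge_atTop 1] with n hlt hn1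
        have h1 := hpow n hn1
        have hρn : (0:ℝ) < ρ ^ n := by positivity
        have h2 : C * r ^ (c * (n:ℝ) ^ α) * (b / ρ) ^ n ≤ 1 := hlt
        rw [div_pow, ← mul_div_assoc] at h2
        exact h1.trans ((div_le_one hρn).mp h2)
      have hO : (fun n : ℕ => ‖B ^ n‖) =O[atTop] (fun n : ℕ => ρ ^ n) := by
        apply IsBigO.of_bound 1
        filter_upwards [hev] with n hn
        simpa [Real.norm_eq_abs, abs_of_pos hρ0] using hn
      exact summable_of_isBigO_nat (summable_geometric_of_lt_one hρ0.le hρ1) hO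
  refine ⟨hsum, ?_⟩
  obtain ⟨n, hn1, hnlt⟩ : ∃ n : ℕ, 1 ≤ n ∧ ‖B ^ n‖ < 1 := by
    have h := hsum.tendsto_atTop_zero.eventually_lt_const (by norm_num : (0:ℝ) < 1)
    exact (h.and (eventually_ge_atTop 1)).exists.imp (fun n hn => ⟨hn.2, hn.1⟩)
  obtain ⟨u, hu⟩ := isUnit_one_sub_of_norm_lt_one hnlt
  set s : 𝒜 := ∑ i ∈ Finset.range n, B ^ i with hs
  have hright : (1 - B) * s = (u : 𝒜) := by
    rw [hu, hs, mul_neg_geom_sum]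
  have hleft : s * (1 - B) = (u : 𝒜) := by
    rw [hu, hs, geom_sum_mul_neg]
  have h1 : (1 - B) * (s * ↑u⁻¹) = 1 := by
    rw [← mul_assoc, hright, Units.mul_inv]
  have h2 : (↑u⁻¹ * s) * (1 - B) = 1 := by
    rw [mul_assoc, hleft, Units.inv_mul]
  refine isUnit_iff_exists.mpr ⟨s * ↑u⁻¹, h1, ?_⟩
  rw [← left_inv_eq_right_inv h2 h1]
  exact h2
end
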